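/- arXiv:2002.09959 — 2 statements merged into one kernel-verified Lean document; each statement's English description precedes it below -/
import Mathlib

section
/- If f does not depend on y (f_y ≡ 0, i.e. the ODE is y'' = f(x, y')), then the contact metric structure (φ, ξ₂, η², g) is Sasakian: the Levi-Civita connection ∇ of g satisfies (∇_X φ)Y = g(X,Y) ξ₂ − η²(Y) X, i.e. ∇_X(φY) − φ(∇_X Y) = g(X,Y) ξ₂ − η²(Y) X, for all smooth vector fields X, Y on Σ. -/
/-!
Concrete model of the geometry of a second order ODE  y'' = f(x, y, y')
on Σ = ℝ³ with coordinates (x, y, p):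

* a vector field is given by its components w.r.t. (∂x, ∂y, ∂p);
* a 1-form by its components w.r.t. (dx, dy, dp);
* a 2-form by its components w.r.t. (dy∧dp, dp∧dx, dx∧dy);
* a 3-form by its coefficient w.r.t. dx∧dy∧dp.
-/

noncomputable section

/-- Points of Σ = ℝ³ with coordinates (x, y, p). -/
abbrev Pt : Type := ℝ × ℝ × ℝ

/-- Componentwise dot product of triples. -/
def dot (a b : Pt) : ℝ := a.1 * b.1 + a.2.1 * b.2.1 + a.2.2 * b.2.2

/-- Componentwise cross product of triples. -/
def cross (a b : Pt) : Pt :=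
  (a.2.1 * b.2.2 - a.2.2 * b.2.1,
   a.2.2 * b.1 - a.1 * b.2.2,
   a.1 * b.2.1 - a.2.1 * b.1)

/-- Partial derivative ∂/∂x. -/
def pdx (F : Pt → ℝ) (q : Pt) : ℝ := fderiv ℝ F q (1, 0, 0)
/-- Partial derivative ∂/∂y. -/
def pdy (F : Pt → ℝ) (q : Pt) : ℝ := fderiv ℝ F q (0, 1, 0)
/-- Partial derivative ∂/∂p. -/
def pdp (F : Pt → ℝ) (q : Pt) : ℝ := fderiv ℝ F q (0, 0, 1)

/-- A 1-form: components w.r.t. (dx, dy, dp). -/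
abbrev Form1 : Type := Pt → Pt
/-- A 2-form: components w.r.t. (dy∧dp, dp∧dx, dx∧dy). -/
abbrev Form2 : Type := Pt → Pt
/-- A 3-form: coefficient w.r.t. dx∧dy∧dp. -/
abbrev Form3 : Type := Pt → ℝ
/-- A vector field: components w.r.t. (∂x, ∂y, ∂p). -/
abbrev VF : Type := Pt → Pt

/-- Smoothness (C^∞) of a real function on Σ. -/
def SmoothFn (F : Pt → ℝ) : Prop := ContDiff ℝ (⊤ : ℕ∞) F
/-- Smoothness (C^∞) of a vector field on Σ. -/
def SmoothVF (X : VF) : Prop := ContDiff ℝ (⊤ : ℕ∞) X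
/-- Smoothness (C^∞) of a 1-form on Σ. -/
def SmoothForm1 (ω : Form1) : Prop := ContDiff ℝ (⊤ : ℕ∞) ω

/-- Exterior derivative of a function. -/
def dFun (F : Pt → ℝ) : Form1 := fun q => (pdx F q, pdy F q, pdp F q)

/-- Exterior derivative of a 1-form (the "curl", in the bases above). -/
def d1 (ω : Form1) : Form2 := fun q =>
  (pdy (fun r => (ω r).2.2) q - pdp (fun r => (ω r).2.1) q,
   pdp (fun r => (ω r).1) q - pdx (fun r => (ω r).2.2) q,
   pdx (fun r => (ω r).2.1) q - pdy (fun r => (ω r).1) q)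

/-- Wedge product of two 1-forms. -/
def w11 (ω τ : Form1) : Form2 := fun q => cross (ω q) (τ q)

/-- Wedge product of a 1-form and a 2-form. -/
def w12 (ω : Form1) (σ : Form2) : Form3 := fun q => dot (ω q) (σ q)

/-- Evaluation of a 1-form on a vector field. -/
def ev1 (ω : Form1) (X : VF) : Pt → ℝ := fun q => dot (ω q) (X q)

/-- Evaluation of a 2-form on a pair of vector fields. -/
def ev2 (σ : Form2) (X Y : VF) : Pt → ℝ := fun q => dot (σ q) (cross (X q) (Y q))

/-- Lie bracket of vector fields: [X,Y]^i = X^j ∂_j Y^i − Y^j ∂_j X^i. -/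
def lie (X Y : VF) : VF := fun q => fderiv ℝ Y q (X q) - fderiv ℝ X q (Y q)

/-- Derivative of a function along a vector field: X(F). -/
def vderiv (X : VF) (F : Pt → ℝ) : Pt → ℝ := fun q => fderiv ℝ F q (X q)

/-- η¹ = (1/2) dx. -/
def η1 : Form1 := fun _ => (1/2, 0, 0)
/-- η² = (1/2)(dy − p dx). -/
def η2 : Form1 := fun q => (-q.2.2/2, 1/2, 0)
/-- η³ = (1/2)(dp − f dx). -/
def η3 (f : Pt → ℝ) : Form1 := fun q => (-f q/2, 0, 1/2)

/-- ξ₁ = 2(∂x + p ∂y + f ∂p). -/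
def ξ1 (f : Pt → ℝ) : VF := fun q => (2, 2 * q.2.2, 2 * f q)
/-- ξ₂ = 2 ∂y. -/
def ξ2 : VF := fun _ => (0, 2, 0)
/-- ξ₃ = 2 ∂p. -/
def ξ3 : VF := fun _ => (0, 0, 2)

/-- Pointwise value of the Riemannian metric g = η¹⊗η¹ + η²⊗η² + η³⊗η³. -/
def gVal (f : Pt → ℝ) (q : Pt) (v w : Pt) : ℝ :=
  dot (η1 q) v * dot (η1 q) w + dot (η2 q) v * dot (η2 q) w +
    dot (η3 f q) v * dot (η3 f q) w

/-- The metric applied to vector fields. -/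
def gMet (f : Pt → ℝ) (X Y : VF) : Pt → ℝ := fun q => gVal f q (X q) (Y q)

/-- The volume form vol_g = η¹ ∧ η² ∧ η³. -/
def volg (f : Pt → ℝ) : Form3 := w12 η1 (w11 η2 (η3 f))

/-- Pointwise action of the (1,1)-tensor φ = η³⊗ξ₁ − η¹⊗ξ₃. -/
def phiAt (f : Pt → ℝ) (q : Pt) (v : Pt) : Pt :=
  dot (η3 f q) v • ξ1 f q - dot (η1 q) v • ξ3 q

/-- The tensor φ applied to a vector field. -/
def phi (f : Pt → ℝ) (X : VF) : VF := fun q => phiAt f q (X q)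

/-- The Koszul expression, equal to 2·g(∇_X Y, Z) for the Levi-Civita connection ∇ of g. -/
def koszul (f : Pt → ℝ) (X Y Z : VF) : Pt → ℝ := fun q =>
  vderiv X (gMet f Y Z) q + vderiv Y (gMet f X Z) q - vderiv Z (gMet f X Y) q
    + gMet f (lie X Y) Z q - gMet f (lie X Z) Y q - gMet f (lie Y Z) X q

/-- The Levi-Civita connection of g, recovered from the Koszul formula through the
    g-orthonormal frame (ξ₁, ξ₂, ξ₃): ∇_X Y = Σ_k g(∇_X Y, ξ_k) ξ_k. -/
def nabla (f : Pt → ℝ) (X Y : VF) : VF := fun q =>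
  (koszul f X Y (ξ1 f) q / 2) • ξ1 f q + (koszul f X Y ξ2 q / 2) • ξ2 q
    + (koszul f X Y ξ3 q / 2) • ξ3 q

/-- The g-gradient of a function, through the g-orthonormal frame (ξ₁, ξ₂, ξ₃):
    ∇F = Σ_k (ξ_k F) ξ_k, the unique field with g(∇F, X) = dF(X). -/
def grad (f : Pt → ℝ) (F : Pt → ℝ) : VF := fun q =>
  vderiv (ξ1 f) F q • ξ1 f q + vderiv ξ2 F q • ξ2 q + vderiv ξ3 F q • ξ3 q

/-- The cross product of g: the unique field with g(X ×_g Y, Z) = vol_g(X, Y, Z),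
    recovered through the g-orthonormal frame (ξ₁, ξ₂, ξ₃). -/
def crossg (f : Pt → ℝ) (X Y : VF) : VF := fun q =>
  (volg f q * dot (cross (X q) (Y q)) (ξ1 f q)) • ξ1 f q
    + (volg f q * dot (cross (X q) (Y q)) (ξ2 q)) • ξ2 q
    + (volg f q * dot (cross (X q) (Y q)) (ξ3 q)) • ξ3 q

/-!
By the Koszul formula, in coordinates `∇_X Y = DY(X) + Γ(X, Y)`, where the Christoffel term `Γ`
only involves the first derivatives of the coefficients of `g` and is tensorial in `X` and `Y`.
Since `φ` is tensorial as well, the derivatives of `Y` cancel in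
`∇_X(φY) − φ(∇_X Y) = (D_X φ)Y + Γ(X, φY) − φ Γ(X, Y)`, so the claim is a pointwise polynomial
identity in `X(q)`, `Y(q)`, `p`, `f(q)` and `df(q)`, which holds as soon as `∂f/∂y = 0`.
-/

section Dot

variable {E : Type*} [NormedAddCommGroup E] [NormedSpace ℝ E]

theorem DifferentiableAt.dot {A B : E → Pt} {q : E} (hA : DifferentiableAt ℝ A q)
    (hB : DifferentiableAt ℝ B q) : DifferentiableAt ℝ (fun r => dot (A r) (B r)) q := by
  unfold _root_.dot
  fun_prop

theorem fderiv_dot_apply {A B : E → Pt} {q : E} (hA : DifferentiableAt ℝ A q)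
    (hB : DifferentiableAt ℝ B q) (v : E) :
    fderiv ℝ (fun r => dot (A r) (B r)) q v
      = dot (fderiv ℝ A q v) (B q) + dot (A q) (fderiv ℝ B q v) := by
  have h : HasFDerivAt (fun r => dot (A r) (B r)) _ q :=
    ((hA.hasFDerivAt.fst.mul hB.hasFDerivAt.fst).add
      (hA.hasFDerivAt.snd.fst.mul hB.hasFDerivAt.snd.fst)).add
      (hA.hasFDerivAt.snd.snd.mul hB.hasFDerivAt.snd.snd)
  rw [h.fderiv]
  simp only [dot, add_apply, smul_apply, ContinuousLinearMap.comp_apply,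
    ContinuousLinearMap.coe_fst', ContinuousLinearMap.coe_snd', smul_eq_mul]
  ring

end Dot

theorem fderiv_apply_of_pdy_eq_zero {F : Pt → ℝ} {q : Pt} (hy : pdy F q = 0) (v : Pt) :
    fderiv ℝ F q v = v.1 * pdx F q + v.2.2 * pdp F q := by
  have hv : v = v.1 • ((1 : ℝ), (0 : ℝ), (0 : ℝ)) + v.2.1 • ((0 : ℝ), (1 : ℝ), (0 : ℝ))
      + v.2.2 • ((0 : ℝ), (0 : ℝ), (1 : ℝ)) := by
    simp
  have hy' : fderiv ℝ F q (0, 1, 0) = 0 := hy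
  conv_lhs => rw [hv, map_add, map_add, map_smul, map_smul, map_smul]
  simp only [smul_eq_mul, hy', mul_zero, add_zero, pdx, pdp]

theorem differentiableAt_η2 (q : Pt) : DifferentiableAt ℝ η2 q := by
  unfold η2
  fun_prop

theorem differentiableAt_η3 {f : Pt → ℝ} {q : Pt} (hf : DifferentiableAt ℝ f q) :
    DifferentiableAt ℝ (η3 f) q := by
  unfold η3
  fun_prop

theorem differentiableAt_ξ1 {f : Pt → ℝ} {q : Pt} (hf : DifferentiableAt ℝ f q) :
    DifferentiableAt ℝ (ξ1 f) q := by
  unfold ξ1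
  fun_prop

theorem fderiv_η2_apply (q v : Pt) : fderiv ℝ η2 q v = (-v.2.2 / 2, 0, 0) := by
  unfold η2
  simp (disch := fun_prop) [DifferentiableAt.fderiv_prodMk, div_eq_mul_inv, fderiv_mul_const,
    fderiv_fun_neg, fderiv.snd]
  ring

theorem fderiv_η3_apply {f : Pt → ℝ} {q : Pt} (hf : DifferentiableAt ℝ f q) (v : Pt) :
    fderiv ℝ (η3 f) q v = (-fderiv ℝ f q v / 2, 0, 0) := by
  unfold η3
  simp (disch := fun_prop) [DifferentiableAt.fderiv_prodMk, div_eq_mul_inv, fderiv_mul_const,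
    fderiv_fun_neg]
  ring

theorem fderiv_ξ1_apply {f : Pt → ℝ} {q : Pt} (hf : DifferentiableAt ℝ f q) (v : Pt) :
    fderiv ℝ (ξ1 f) q v = (0, 2 * v.2.2, 2 * fderiv ℝ f q v) := by
  unfold ξ1
  simp (disch := fun_prop) [DifferentiableAt.fderiv_prodMk, fderiv_const_mul, fderiv.snd]

def metricDeriv (f : Pt → ℝ) (q v a b : Pt) : ℝ := fderiv ℝ (fun r => gVal f r a b) q v

theorem fderiv_gMet_apply {f : Pt → ℝ} {A B : VF} {q : Pt} (hf : DifferentiableAt ℝ f q)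
    (hA : DifferentiableAt ℝ A q) (hB : DifferentiableAt ℝ B q) (v : Pt) :
    fderiv ℝ (gMet f A B) q v
      = metricDeriv f q v (A q) (B q) + gVal f q (fderiv ℝ A q v) (B q)
        + gVal f q (A q) (fderiv ℝ B q v) := by
  unfold gMet metricDeriv gVal η1
  simp (disch := apply_rules [DifferentiableAt.dot, DifferentiableAt.fun_mul,
      DifferentiableAt.fun_add, differentiableAt_const, differentiableAt_η2, differentiableAt_η3])
    only [fderiv_fun_add, fderiv_fun_mul, add_apply, smul_apply, smul_eq_mul, fderiv_dot_apply,
      fderiv_fun_const, Pi.zero_apply, zero_apply]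
  simp only [dot, Prod.fst_zero, Prod.snd_zero]
  ring

theorem metricDeriv_eq {f : Pt → ℝ} {q : Pt} (hf : DifferentiableAt ℝ f q) (v a b : Pt) :
    metricDeriv f q v a b = -(v.2.2 * (a.1 * dot (η2 q) b + dot (η2 q) a * b.1)
      + fderiv ℝ f q v * (a.1 * dot (η3 f q) b + dot (η3 f q) a * b.1)) / 2 := by
  unfold metricDeriv gVal η1
  simp (disch := apply_rules [DifferentiableAt.dot, DifferentiableAt.fun_mul,
      DifferentiableAt.fun_add, differentiableAt_const, differentiableAt_η2, differentiableAt_η3])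
    only [fderiv_fun_add, fderiv_fun_mul, add_apply, smul_apply, smul_eq_mul, fderiv_dot_apply,
      fderiv_fun_const, Pi.zero_apply, zero_apply, fderiv_η2_apply, fderiv_η3_apply hf]
  simp only [dot, Prod.fst_zero, Prod.snd_zero]
  ring

theorem gVal_frame_expansion (f : Pt → ℝ) (q u : Pt) :
    gVal f q u (ξ1 f q) • ξ1 f q + gVal f q u (ξ2 q) • ξ2 q + gVal f q u (ξ3 q) • ξ3 q = u := by
  simp only [gVal, dot, η1, η2, η3, ξ1, ξ2, ξ3, Prod.ext_iff, Prod.smul_mk, Prod.mk_add_mk,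
    smul_eq_mul]
  refine ⟨?_, ?_, ?_⟩ <;> ring

theorem koszul_eq {f : Pt → ℝ} {X Y Z : VF} {q : Pt} (hf : DifferentiableAt ℝ f q)
    (hX : DifferentiableAt ℝ X q) (hY : DifferentiableAt ℝ Y q) (hZ : DifferentiableAt ℝ Z q) :
    koszul f X Y Z q = 2 * gVal f q (fderiv ℝ Y q (X q)) (Z q)
      + metricDeriv f q (X q) (Y q) (Z q) + metricDeriv f q (Y q) (X q) (Z q)
      - metricDeriv f q (Z q) (X q) (Y q) := by
  simp only [koszul, vderiv]
  rw [fderiv_gMet_apply hf hY hZ, fderiv_gMet_apply hf hX hZ, fderiv_gMet_apply hf hX hY]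
  simp only [gMet, lie, gVal, dot, Prod.fst_sub, Prod.snd_sub]
  ring

def christoffel (f : Pt → ℝ) (q v w : Pt) : Pt :=
  ((metricDeriv f q v w (ξ1 f q) + metricDeriv f q w v (ξ1 f q)
      - metricDeriv f q (ξ1 f q) v w) / 2) • ξ1 f q
    + ((metricDeriv f q v w (ξ2 q) + metricDeriv f q w v (ξ2 q)
      - metricDeriv f q (ξ2 q) v w) / 2) • ξ2 q
    + ((metricDeriv f q v w (ξ3 q) + metricDeriv f q w v (ξ3 q)
      - metricDeriv f q (ξ3 q) v w) / 2) • ξ3 q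

theorem nabla_eq {f : Pt → ℝ} {X Y : VF} {q : Pt} (hf : DifferentiableAt ℝ f q)
    (hX : DifferentiableAt ℝ X q) (hY : DifferentiableAt ℝ Y q) :
    nabla f X Y q = fderiv ℝ Y q (X q) + christoffel f q (X q) (Y q) := by
  rw [nabla, koszul_eq hf hX hY (differentiableAt_ξ1 hf),
    koszul_eq (Z := ξ2) hf hX hY (differentiableAt_const _),
    koszul_eq (Z := ξ3) hf hX hY (differentiableAt_const _), christoffel]
  conv_rhs => rw [← gVal_frame_expansion f q (fderiv ℝ Y q (X q))]
  module

def phiDeriv (f : Pt → ℝ) (q v w : Pt) : Pt := fderiv ℝ (fun r => phiAt f r w) q v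

theorem phiAt_add (f : Pt → ℝ) (q v w : Pt) :
    phiAt f q (v + w) = phiAt f q v + phiAt f q w := by
  simp only [phiAt, dot, Prod.fst_add, Prod.snd_add]
  module

theorem differentiableAt_phi {f : Pt → ℝ} {Y : VF} {q : Pt} (hf : DifferentiableAt ℝ f q)
    (hY : DifferentiableAt ℝ Y q) : DifferentiableAt ℝ (phi f Y) q := by
  unfold phi phiAt η1 ξ3
  apply_rules [DifferentiableAt.dot, DifferentiableAt.fun_smul, DifferentiableAt.fun_sub,
    differentiableAt_const, differentiableAt_η3, differentiableAt_ξ1]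

theorem fderiv_phi_apply {f : Pt → ℝ} {Y : VF} {q : Pt} (hf : DifferentiableAt ℝ f q)
    (hY : DifferentiableAt ℝ Y q) (v : Pt) :
    fderiv ℝ (phi f Y) q v = phiDeriv f q v (Y q) + phiAt f q (fderiv ℝ Y q v) := by
  unfold phi phiDeriv phiAt η1 ξ3
  simp (disch := apply_rules [DifferentiableAt.dot, DifferentiableAt.fun_smul,
      DifferentiableAt.fun_sub, differentiableAt_const, differentiableAt_η3, differentiableAt_ξ1])
    only [fderiv_fun_sub, fderiv_fun_smul, sub_apply, add_apply, smul_apply,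
      ContinuousLinearMap.smulRight_apply, fderiv_dot_apply, fderiv_fun_const, Pi.zero_apply,
      zero_apply]
  simp only [dot, Prod.fst_zero, Prod.snd_zero]
  module

theorem phiDeriv_eq {f : Pt → ℝ} {q : Pt} (hf : DifferentiableAt ℝ f q) (v w : Pt) :
    phiDeriv f q v w = (-fderiv ℝ f q v * w.1 / 2) • ξ1 f q
      + dot (η3 f q) w • (0, 2 * v.2.2, 2 * fderiv ℝ f q v) := by
  unfold phiDeriv phiAt η1 ξ3
  simp (disch := apply_rules [DifferentiableAt.dot, DifferentiableAt.fun_smul,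
      DifferentiableAt.fun_sub, differentiableAt_const, differentiableAt_η3, differentiableAt_ξ1])
    only [fderiv_fun_sub, fderiv_fun_smul, sub_apply, add_apply, smul_apply,
      ContinuousLinearMap.smulRight_apply, fderiv_dot_apply, fderiv_fun_const, Pi.zero_apply,
      zero_apply, fderiv_η3_apply hf, fderiv_ξ1_apply hf]
  simp only [dot, ξ1, Prod.ext_iff, Prod.smul_mk, Prod.mk_add_mk, Prod.fst_zero, Prod.snd_zero,
    smul_zero, smul_eq_mul, Prod.fst_add, Prod.snd_add, Prod.fst_sub, Prod.snd_sub]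
  refine ⟨?_, ?_, ?_⟩ <;> ring

theorem sasakian_identity_pointwise {f : Pt → ℝ} {q : Pt} (hf : DifferentiableAt ℝ f q)
    (hy : pdy f q = 0) (v w : Pt) :
    phiDeriv f q v w + christoffel f q v (phiAt f q w) - phiAt f q (christoffel f q v w)
      = gVal f q v w • ξ2 q - dot (η2 q) w • v := by
  simp only [christoffel, phiDeriv_eq hf, metricDeriv_eq hf, fderiv_apply_of_pdy_eq_zero hy]
  simp only [phiAt, gVal, dot, η1, η2, η3, ξ1, ξ2, ξ3, Prod.ext_iff, Prod.smul_mk, Prod.mk_add_mk,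
    Prod.mk_sub_mk, Prod.fst_sub, Prod.snd_sub, Prod.smul_fst, Prod.smul_snd, smul_eq_mul]
  refine ⟨?_, ?_, ?_⟩ <;> ring

theorem nabla_phi_sub_phi_nabla {f : Pt → ℝ} {X Y : VF} {q : Pt} (hf : DifferentiableAt ℝ f q)
    (hy : pdy f q = 0) (hX : DifferentiableAt ℝ X q) (hY : DifferentiableAt ℝ Y q) :
    nabla f X (phi f Y) q - phiAt f q (nabla f X Y q)
      = gVal f q (X q) (Y q) • ξ2 q - dot (η2 q) (Y q) • X q := by
  rw [nabla_eq hf hX (differentiableAt_phi hf hY), nabla_eq hf hX hY, fderiv_phi_apply hf hY,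
    phiAt_add, ← sasakian_identity_pointwise hf hy]
  simp only [phi]
  abel

/-- if f does not depend on y (the ODE is y'' = f(x,y')), the contact
metric structure (φ, ξ₂, η², g) is Sasakian: the Levi-Civita connection ∇ of g satisfies
(∇_X φ)Y = ∇_X(φY) − φ(∇_X Y) = g(X,Y) ξ₂ − η²(Y) X for all smooth vector fields X, Y. -/
theorem sasakian_structure (f : Pt → ℝ) (hf : ContDiff ℝ (⊤ : ℕ∞) f)
    (hy : ∀ q, pdy f q = 0) :
    ∀ X Y : VF, SmoothVF X → SmoothVF Y → ∀ q,
      nabla f X (phi f Y) q - phiAt f q (nabla f X Y q)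
        = gVal f q (X q) (Y q) • ξ2 q - dot (η2 q) (Y q) • X q := by
  intro X Y hX hY q
  exact nabla_phi_sub_phi_nabla (hf.differentiable (by simp) q) (hy q)
    (hX.differentiable (by simp) q) (hY.differentiable (by simp) q)
end
end

section
/- Assume f depends only on x, and let F be an antiderivative of f (F' = f). Set H = x/2 and H₁ = (1/2)F − p/2. Then the Reeb vector field ξ₂ has the compatible bi-Hamiltonian representation ξ₂ = ξ₃ × ∇H = ξ₁ × ∇H₁; explicitly, ∇H = ξ₁, ∇H₁ = −ξ₃, ξ₃ × ξ₁ = ξ₂, and ξ₁ × (−ξ₃) = ξ₂. In particular the independent variable x (up to the factor 1/2) is a Hamiltonian function for the Reeb vector field ξ₂. -/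
/-!
Concrete model of the geometry of a second order ODE  y'' = f(x, y, y')
on Σ = ℝ³ with coordinates (x, y, p):

* a vector field is given by its components w.r.t. (∂x, ∂y, ∂p);
* a 1-form by its components w.r.t. (dx, dy, dp);
* a 2-form by its components w.r.t. (dy∧dp, dp∧dx, dx∧dy);
* a 3-form by its coefficient w.r.t. dx∧dy∧dp.
-/

noncomputable section

/-!
Everything is a pointwise computation in the frame (ξ₁, ξ₂, ξ₃). For every `f` the volume
coefficient of η¹ ∧ η² ∧ η³ is the constant 1/8, which gives ξ₃ × ξ₁ = ξ₁ × (−ξ₃) = ξ₂.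
The gradients only involve dH = dx/2 and dH₁ = (f dx − dp)/2; the ξ₁-component of the
latter is f − f = 0 precisely because F' = f.
-/

lemma volg_apply (f : Pt → ℝ) (q : Pt) : volg f q = 1 / 8 := by
  simp only [volg, w12, w11, η1, η2, η3, cross, dot]
  ring

lemma crossg_ξ3_ξ1 (f : Pt → ℝ) : crossg f ξ3 (ξ1 f) = ξ2 := by
  funext q
  simp only [crossg, volg_apply, ξ1, ξ2, ξ3, cross, dot, Prod.smul_mk, smul_eq_mul,
    Prod.mk_add_mk, Prod.mk.injEq]
  refine ⟨by ring, by ring, by ring⟩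

lemma crossg_ξ1_neg_ξ3 (f : Pt → ℝ) : crossg f (ξ1 f) (fun r => -(ξ3 r)) = ξ2 := by
  funext q
  simp only [crossg, volg_apply, ξ1, ξ2, ξ3, cross, dot, Prod.neg_mk, Prod.smul_mk, smul_eq_mul,
    Prod.mk_add_mk, Prod.mk.injEq]
  refine ⟨by ring, by ring, by ring⟩

lemma grad_half_fst (f : Pt → ℝ) : grad f (fun r : Pt => r.1 / 2) = ξ1 f := by
  funext q
  have hH : HasFDerivAt (fun r : Pt => r.1 / 2)
      ((2 : ℝ)⁻¹ • ContinuousLinearMap.fst ℝ ℝ (ℝ × ℝ)) q := by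
    simpa only [div_eq_mul_inv] using (hasFDerivAt_fst (𝕜 := ℝ) (p := q)).mul_const (2 : ℝ)⁻¹
  simp only [grad, vderiv, hH.fderiv, ξ1, ξ2, ξ3, FunLike.coe_smul, Pi.smul_apply,
    ContinuousLinearMap.coe_fst', smul_eq_mul, Prod.smul_mk, Prod.mk_add_mk]
  norm_num

lemma grad_half_antideriv_sub_half (f0 F : ℝ → ℝ) (hF : ∀ x, HasDerivAt F (f0 x) x) :
    grad (fun r => f0 r.1) (fun r : Pt => F r.1 / 2 - r.2.2 / 2) = fun r => -(ξ3 r) := by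
  funext q
  have hFx : HasFDerivAt (fun r : Pt => F r.1)
      (f0 q.1 • ContinuousLinearMap.fst ℝ ℝ (ℝ × ℝ)) q :=
    (hF q.1).comp_hasFDerivAt q hasFDerivAt_fst
  have hp : HasFDerivAt (fun r : Pt => r.2.2)
      ((ContinuousLinearMap.snd ℝ ℝ ℝ).comp (ContinuousLinearMap.snd ℝ ℝ (ℝ × ℝ))) q :=
    hasFDerivAt_snd.snd
  have hH1 := (hFx.mul_const (2 : ℝ)⁻¹).fun_sub (hp.mul_const (2 : ℝ)⁻¹)
  simp only [← div_eq_mul_inv] at hH1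
  simp only [grad, vderiv, hH1.fderiv, ξ1, ξ2, ξ3, FunLike.coe_sub, Pi.sub_apply,
    FunLike.coe_smul, Pi.smul_apply, ContinuousLinearMap.comp_apply, ContinuousLinearMap.coe_fst',
    ContinuousLinearMap.coe_snd', smul_eq_mul, Prod.smul_mk, Prod.mk_add_mk, Prod.neg_mk,
    Prod.mk.injEq]
  refine ⟨by ring, by ring, by ring⟩

theorem reeb_bi_hamiltonian_general (f0 : ℝ → ℝ)
    (F : ℝ → ℝ) (hF : ∀ x, HasDerivAt F (f0 x) x) :
    (∀ q, grad (fun r => f0 r.1) (fun r : Pt => r.1 / 2) q = ξ1 (fun r => f0 r.1) q) ∧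
    (∀ q, grad (fun r => f0 r.1) (fun r : Pt => F r.1 / 2 - r.2.2 / 2) q = -(ξ3 q)) ∧
    (∀ q, crossg (fun r => f0 r.1) ξ3 (ξ1 (fun r => f0 r.1)) q = ξ2 q) ∧
    (∀ q, crossg (fun r => f0 r.1) (ξ1 (fun r => f0 r.1)) (fun r => -(ξ3 r)) q = ξ2 q) ∧
    (∀ q, ξ2 q = crossg (fun r => f0 r.1) ξ3
        (grad (fun r => f0 r.1) (fun r : Pt => r.1 / 2)) q) ∧
    (∀ q, ξ2 q = crossg (fun r => f0 r.1) (ξ1 (fun r => f0 r.1))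
        (grad (fun r => f0 r.1) (fun r : Pt => F r.1 / 2 - r.2.2 / 2)) q) := by
  rw [grad_half_fst, grad_half_antideriv_sub_half f0 F hF, crossg_ξ3_ξ1, crossg_ξ1_neg_ξ3]
  exact ⟨fun _ => rfl, fun _ => rfl, fun _ => rfl, fun _ => rfl, fun _ => rfl, fun _ => rfl⟩

/-- for y'' = f(x) with f a smooth function of x alone and F an
antiderivative of f, setting H = x/2 and H₁ = F/2 − p/2, the Reeb vector field ξ₂ has
the compatible bi-Hamiltonian representation ξ₂ = ξ₃ ×_g ∇H = ξ₁ ×_g ∇H₁; explicitly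
∇H = ξ₁, ∇H₁ = −ξ₃, ξ₃ ×_g ξ₁ = ξ₂ and ξ₁ ×_g (−ξ₃) = ξ₂.  In particular the
independent variable x (up to the factor 1/2) is a Hamiltonian function for ξ₂. -/
theorem reeb_bi_hamiltonian (f0 : ℝ → ℝ) (hf0 : ContDiff ℝ (⊤ : ℕ∞) f0)
    (F : ℝ → ℝ) (hF : ∀ x, HasDerivAt F (f0 x) x) :
    (∀ q, grad (fun r => f0 r.1) (fun r : Pt => r.1 / 2) q = ξ1 (fun r => f0 r.1) q) ∧
    (∀ q, grad (fun r => f0 r.1) (fun r : Pt => F r.1 / 2 - r.2.2 / 2) q = -(ξ3 q)) ∧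
    (∀ q, crossg (fun r => f0 r.1) ξ3 (ξ1 (fun r => f0 r.1)) q = ξ2 q) ∧
    (∀ q, crossg (fun r => f0 r.1) (ξ1 (fun r => f0 r.1)) (fun r => -(ξ3 r)) q = ξ2 q) ∧
    (∀ q, ξ2 q = crossg (fun r => f0 r.1) ξ3
        (grad (fun r => f0 r.1) (fun r : Pt => r.1 / 2)) q) ∧
    (∀ q, ξ2 q = crossg (fun r => f0 r.1) (ξ1 (fun r => f0 r.1))
        (grad (fun r => f0 r.1) (fun r : Pt => F r.1 / 2 - r.2.2 / 2)) q) :=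
  reeb_bi_hamiltonian_general f0 F hF
end
end
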